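/- For m ∈ ℕ and 0 ≤ i ≤ n, every nonzero ideal of R_mG_i contains the element p^{m−1}(σ−1)^{p^i−1} = p^{m−1}(1+σ+⋯+σ^{p^i−1}). -/

import Mathlib

open scoped BigOperators

/-- `U_i = 1 + p^i ℤ` as a subset of `ℤ`. -/
def Uset (p i : ℕ) : Set ℤ := {d : ℤ | ∃ k : ℤ, d = 1 + (p : ℤ) ^ i * k}

/-- `−U_i = {−u : u ∈ U_i}` as a subset of `ℤ`. -/
def negUset (p i : ℕ) : Set ℤ := {d : ℤ | -d ∈ Uset p i}

/-- The coefficient ring `R_m = ℤ/p^mℤ`. -/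
abbrev Rm (p m : ℕ) : Type := ZMod (p ^ m)

/-- The cyclic group of order `p^n`, written multiplicatively. -/
abbrev Cyc (p n : ℕ) : Type := Multiplicative (ZMod (p ^ n))

/-- The group ring `R_m G_n` of the cyclic group of order `p^n` over `ℤ/p^mℤ`. -/
abbrev RG (p m n : ℕ) : Type := MonoidAlgebra (Rm p m) (Cyc p n)

/-- The distinguished generator `σ` of the cyclic group of order `p^n`,
viewed as an element of the group ring `R_m G_n`. -/
noncomputable def sg (p m n : ℕ) : RG p m n :=
  MonoidAlgebra.of (Rm p m) (Cyc p n) (Multiplicative.ofAdd (1 : ZMod (p ^ n)))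

/-- The norm operator `P(i,j) = Σ_{k=0}^{p^{i-j}-1} σ^{k p^j}` in `R_m G_n`. -/
noncomputable def Pel (p m n i j : ℕ) : RG p m n :=
  ∑ k ∈ Finset.range (p ^ (i - j)), sg p m n ^ (k * p ^ j)

/-- The operator `Q_d(i,j) = Σ_{k=0}^{p^{i-j}-1} (d^{p^j})^{p^{i-j}-1-k} (σ^{p^j})^k` in `R_m G_n`. -/
noncomputable def Qel (p m n : ℕ) (d : ℤ) (i j : ℕ) : RG p m n :=
  ∑ k ∈ Finset.range (p ^ (i - j)),
    ((d : RG p m n) ^ p ^ j) ^ (p ^ (i - j) - 1 - k) * sg p m n ^ (p ^ j * k)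

/-- `p^a` for `a ∈ {−∞} ∪ ℕ`, with the convention `p^{−∞} = 0`. -/
def pexp (p : ℕ) (a : WithBot ℕ) : ℕ := WithBot.recBotCoe 0 (fun k => p ^ k) a

/-- `σ^{p^a}` for `a ∈ {−∞} ∪ ℕ`, with the convention `σ^{p^{−∞}} = 0`. -/
noncomputable def sigmaPow (p m n : ℕ) (a : WithBot ℕ) : RG p m n :=
  WithBot.recBotCoe 0 (fun k => sg p m n ^ p ^ k) a

/-- `P(i,c)` for `c ∈ {−∞} ∪ ℕ`, with the convention `P(i,−∞) = 1`. -/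
noncomputable def PelW (p m n i : ℕ) (c : WithBot ℕ) : RG p m n :=
  WithBot.recBotCoe 1 (fun k => Pel p m n i k) c

/-- The submodule of relations defining `X_{a,d,m}`: the free module on generators
`y = e 0` and `x_i = e (i+1)` modulo `(σ-d)y = Σ p^i x_i` and `σ^{p^{a_i}} x_i = x_i`
(where `σ^{p^{−∞}} x_i = 0`). -/
noncomputable def Xrel (p m n : ℕ) (a : ℕ → WithBot ℕ) (d : ℤ) :
    Submodule (RG p m n) (Fin (m + 1) → RG p m n) :=
  Submodule.span (RG p m n)
    (insert
      ((sg p m n - (d : RG p m n)) •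
          (Pi.single (0 : Fin (m + 1)) 1 : Fin (m + 1) → RG p m n) -
        ∑ i : Fin m, ((p : RG p m n) ^ (i : ℕ)) •
          (Pi.single i.succ 1 : Fin (m + 1) → RG p m n))
      (Set.range fun i : Fin m =>
        (sigmaPow p m n (a (i : ℕ)) - 1) •
          (Pi.single i.succ 1 : Fin (m + 1) → RG p m n)))

/-- The `R_m G`-module `X_{a,d,m}`. -/
abbrev Xmod (p m n : ℕ) (a : ℕ → WithBot ℕ) (d : ℤ) : Type :=
  (Fin (m + 1) → RG p m n) ⧸ Xrel p m n a d

/-- The generator `y` of `X_{a,d,m}`. -/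
noncomputable def Xy (p m n : ℕ) (a : ℕ → WithBot ℕ) (d : ℤ) : Xmod p m n a d :=
  Submodule.Quotient.mk (Pi.single (0 : Fin (m + 1)) 1 : Fin (m + 1) → RG p m n)

/-- The generator `x_i` of `X_{a,d,m}`. -/
noncomputable def Xx (p m n : ℕ) (a : ℕ → WithBot ℕ) (d : ℤ) (i : Fin m) : Xmod p m n a d :=
  Submodule.Quotient.mk (Pi.single i.succ 1 : Fin (m + 1) → RG p m n)

/-- A module is indecomposable if it is nonzero and is not the direct sum of two
nonzero submodules. -/
def IsIndecomposableModule (R M : Type*) [Ring R] [AddCommGroup M] [Module R M] : Prop :=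
  Nontrivial M ∧ ∀ V W : Submodule R M, IsCompl V W → V = ⊥ ∨ W = ⊥

/-- Hypotheses (I)–(V) of Theorem 1, together with the requirement
`a ∈ {−∞,0,1,…,n}^m`. -/
def Hyp (p n m : ℕ) (a : ℕ → WithBot ℕ) (d : ℤ) : Prop :=
  (∀ i < m, a i ≤ (n : WithBot ℕ)) ∧
  d ∈ Uset p 1 ∧
  (∀ i < m, d ^ pexp p (a i) ∈ Uset p (i + 1)) ∧
  (∀ i j : ℕ, i < m → 1 ≤ j → i + j < m → a (i + j) ≠ ⊥ →
    ¬(p = 2 ∧ d ∉ Uset p 2 ∧ i = 0 ∧ a 0 = 0) →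
    a i + (j : WithBot ℕ) < a (i + j)) ∧
  (p = 2 → d ∉ Uset p 2 → a 0 = 0 → ∀ j, 1 ≤ j → j < m → a j ≠ 0) ∧
  (p = 2 → n = 1 → a 0 = ⊥) ∧
  (∀ v : ℕ, p = 2 → 2 ≤ m → 2 ≤ v → d ∈ negUset p v → d ∉ negUset p (v + 1) →
    a 0 = 0 → ∀ i, v ≤ i → i < m → ((i - (v - 1) : ℕ) : WithBot ℕ) < a i ∧ a i ≠ ⊥)

/-- The invariant `l(u)`: the dimension over `F_p` of the `F_p G`-submodule of `M/pM`
generated by the class of `u`; equivalently the least `k` with `(σ-1)^k u ∈ pM`. -/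
noncomputable def ell (p m n : ℕ) {M : Type*} [AddCommGroup M] [Module (RG p m n) M]
    (u : M) : ℕ :=
  sInf {k : ℕ | ((sg p m n - 1) ^ k) • u ∈
    (Ideal.span {(p : RG p m n)} • (⊤ : Submodule (RG p m n) M) : Submodule (RG p m n) M)}

/-- `M^⋆ = {u ∈ M : (σ-1)u = 0 and pu = 0}`. -/
def Mstar (p m n : ℕ) (M : Type*) [AddCommGroup M] [Module (RG p m n) M] : Set M :=
  {u : M | (sg p m n - 1) • u = 0 ∧ (p : RG p m n) • u = 0}
/-- The group ring `ℤG` of the cyclic group of order `p^n`. -/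
abbrev ZG (p n : ℕ) : Type := MonoidAlgebra ℤ (Cyc p n)

/-- The generator `σ` as an element of `ℤG`. -/
noncomputable def sgZ (p n : ℕ) : ZG p n :=
  MonoidAlgebra.of ℤ (Cyc p n) (Multiplicative.ofAdd (1 : ZMod (p ^ n)))

/-- The norm operator `P(i,j)` as an element of `ℤG`. -/
noncomputable def PelZ (p n i j : ℕ) : ZG p n :=
  ∑ k ∈ Finset.range (p ^ (i - j)), sgZ p n ^ (k * p ^ j)

/-- The additive map `φ_d : ℤG → ℤ` induced by `σ^t ↦ d^t` for `0 ≤ t < p^n`. -/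
noncomputable def phiZ (p n : ℕ) (d : ℤ) (f : ZG p n) : ℤ :=
  ∑ t ∈ Finset.range (p ^ n), f.coeff (Multiplicative.ofAdd ((t : ℕ) : ZMod (p ^ n))) * d ^ t

/-- The map `φ_d^{(m)} : R_m G_n → R_m` induced by `σ^t ↦ d^t` for `0 ≤ t < p^n`. -/
noncomputable def phiM (p m n : ℕ) (d : ℤ) (f : RG p m n) : Rm p m :=
  ∑ t ∈ Finset.range (p ^ n), f.coeff (Multiplicative.ofAdd ((t : ℕ) : ZMod (p ^ n))) * (d : Rm p m) ^ t

/-- The natural `R_m`-algebra homomorphism `χ_j : R_m G_i → R_m G_j` for `j ≤ i`. -/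
noncomputable def chiMap (p m : ℕ) {i j : ℕ} (h : j ≤ i) : RG p m i →+* RG p m j :=
  MonoidAlgebra.mapDomainRingHom (Rm p m)
    (AddMonoidHom.toMultiplicative
      ((ZMod.castHom (pow_dvd_pow p h) (ZMod (p ^ j))).toAddMonoidHom))

/-- Coefficient reduction `R_m G_n → R_{m-1} G_n`. -/
noncomputable def barMap (p m n : ℕ) (f : RG p m n) : RG p (m - 1) n :=
  MonoidAlgebra.ofCoeff (Finsupp.mapRange (ZMod.castHom (pow_dvd_pow p (Nat.sub_le m 1)) (ZMod (p ^ (m - 1))))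
    (map_zero _) f.coeff)

/-- `W/p^{m-1}W` is a free `R_{m-1}G_k`-module: there is an additive isomorphism with
a finite power of `R_{m-1}G_k` intertwining the actions of `σ` (and hence of the
coefficients, which act through the additive group structure). -/
def QuotFree (p m n k : ℕ) {M : Type*} [AddCommGroup M] [Module (RG p m n) M]
    (W : Submodule (RG p m n) M) : Prop :=
  ∃ (r : ℕ) (e : (W ⧸ (Ideal.span {(p : RG p m n) ^ (m - 1)} •
      (⊤ : Submodule (RG p m n) W))) ≃+ (Fin r → RG p (m - 1) k)),
    ∀ q, e (sg p m n • q) = fun s => sg p (m - 1) k * e q s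

/-!
Modulo `p` the Frobenius gives `(X - 1)^{p^i} = X^{p^i} - 1`, so `(σ - 1)^{p^i - 1}` agrees with the
norm element `N = ∑ σ^k` up to a multiple of `p`, which `p^{m-1}` kills. The same congruence shows
that `σ - 1` is nilpotent, as is `p`; hence a nonzero ideal contains some `y ≠ 0` annihilated by both.
Such a `y` is fixed by `G`, so `y = c N` with `p c = 0`, which forces `c = p^{m-1} u` with `u` a unit.
-/

open MonoidAlgebra Polynomial Finset

theorem Polynomial.X_sub_one_pow_pred_eq_geom_sum {R : Type*} [CommRing R] (p : ℕ) [ExpChar R p]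
    (i : ℕ) : (X - 1 : R[X]) ^ (p ^ i - 1) = ∑ k ∈ range (p ^ i), X ^ k := by
  apply (monic_X_sub_C (1 : R)).isRegular.right
  simp only [map_one]
  rw [geom_sum_mul, ← pow_succ, Nat.sub_add_cancel (Nat.one_le_pow _ _ (expChar_pos R p)),
    sub_pow_expChar_pow, one_pow]

theorem Polynomial.natCast_dvd_X_sub_one_pow_pred_sub_geom_sum {p : ℕ} (hp : p.Prime) (i : ℕ) :
    (p : ℤ[X]) ∣ (X - 1) ^ (p ^ i - 1) - ∑ k ∈ range (p ^ i), X ^ k := by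
  have := Fact.mk hp
  rw [← map_natCast C, C_dvd_iff_dvd_coeff]
  intro n
  rw [← ZMod.intCast_zmod_eq_zero_iff_dvd, ← eq_intCast (Int.castRingHom (ZMod p)), ← coeff_map]
  simp [Polynomial.map_sub, Polynomial.map_pow, X_sub_one_pow_pred_eq_geom_sum]

theorem natCast_dvd_sub_one_pow_pred_sub_geom_sum {R : Type*} [CommRing R] {p : ℕ} (hp : p.Prime)
    (i : ℕ) (x : R) : (p : R) ∣ (x - 1) ^ (p ^ i - 1) - ∑ k ∈ range (p ^ i), x ^ k := by
  simpa using map_dvd (aeval x) (natCast_dvd_X_sub_one_pow_pred_sub_geom_sum hp i)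

theorem natCast_pow_mul_sub_one_pow_pred {R : Type*} [CommRing R] {p m : ℕ} (hp : p.Prime)
    (hpm : (p : R) ^ (m + 1) = 0) (i : ℕ) (x : R) :
    (p : R) ^ m * (x - 1) ^ (p ^ i - 1) = p ^ m * ∑ k ∈ range (p ^ i), x ^ k := by
  obtain ⟨c, hc⟩ := natCast_dvd_sub_one_pow_pred_sub_geom_sum hp i x
  rw [← sub_eq_zero, ← mul_sub, hc, ← mul_assoc, ← pow_succ, hpm, zero_mul]

theorem isNilpotent_sub_one_of_pow_prime_pow_eq_one {R : Type*} [CommRing R] {p : ℕ}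
    (hp : p.Prime) (hnil : IsNilpotent (p : R)) {i : ℕ} {x : R} (hx : x ^ p ^ i = 1) :
    IsNilpotent (x - 1) := by
  obtain ⟨c, hc⟩ := natCast_dvd_sub_one_pow_pred_sub_geom_sum hp i x
  have hpow : (x - 1) ^ p ^ i = p * (c * (x - 1)) := by
    calc (x - 1) ^ p ^ i
        = ((x - 1) ^ (p ^ i - 1) - ∑ k ∈ range (p ^ i), x ^ k) * (x - 1)
          + (∑ k ∈ range (p ^ i), x ^ k) * (x - 1) := by
          rw [← add_mul, sub_add_cancel, ← pow_succ, Nat.sub_add_cancel (Nat.one_le_pow _ _ hp.pos)]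
      _ = p * (c * (x - 1)) := by rw [hc, geom_sum_mul, hx, sub_self, add_zero, mul_assoc]
  exact IsNilpotent.of_pow (hpow ▸ (Commute.all _ _).isNilpotent_mul_right hnil)

theorem exists_pow_mul_ne_zero_and_mul_eq_zero {M : Type*} [MonoidWithZero M] {a x : M} {n : ℕ}
    (hn : a ^ n * x = 0) (hx : x ≠ 0) : ∃ k, a ^ k * x ≠ 0 ∧ a * (a ^ k * x) = 0 := by
  induction n generalizing x with
  | zero => exact absurd (by simpa using hn) hx
  | succ n ih =>
    by_cases hax : a * x = 0
    · exact ⟨0, by simpa using hx, by simpa using hax⟩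
    · obtain ⟨k, hk, hak⟩ := ih (by rwa [pow_succ, mul_assoc] at hn) hax
      exact ⟨k + 1, by rwa [pow_succ, mul_assoc], by rwa [pow_succ, mul_assoc]⟩

theorem Ideal.exists_ne_zero_mul_eq_zero_of_isNilpotent {R : Type*} [CommSemiring R]
    {I : Ideal R} (hI : I ≠ ⊥) {a b : R} (ha : IsNilpotent a) (hb : IsNilpotent b) :
    ∃ y ∈ I, y ≠ 0 ∧ a * y = 0 ∧ b * y = 0 := by
  obtain ⟨x, hxI, hx⟩ := Submodule.exists_mem_ne_zero_of_ne_bot hI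
  obtain ⟨n, hn⟩ := ha
  obtain ⟨l, hl⟩ := hb
  obtain ⟨k, hk, hak⟩ := exists_pow_mul_ne_zero_and_mul_eq_zero (by rw [hn, zero_mul]) hx
  obtain ⟨j, hj, hbj⟩ := exists_pow_mul_ne_zero_and_mul_eq_zero (by rw [hl, zero_mul]) hk
  refine ⟨b ^ j * (a ^ k * x), I.mul_mem_left _ (I.mul_mem_left _ hxI), hj, ?_, hbj⟩
  rw [mul_left_comm, hak, mul_zero]

theorem MonoidAlgebra.eq_coeff_one_smul_sum_of_of_mul_eq_self {k G : Type*} [Semiring k] [Group G]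
    [Fintype G] {y : k[G]} (hy : ∀ g, of k G g * y = y) : y = y.coeff 1 • ∑ g : G, of k G g := by
  classical
  ext h
  have hyh : y.coeff h = y.coeff 1 := by
    simpa using (congrArg (fun z : k[G] => z.coeff h) (hy h)).symm
  simp [coeff_sum, coeff_single, Finsupp.single_apply, hyh]

theorem ZMod.exists_mul_eq_prime_pow_of_natCast_mul_eq_zero {p m : ℕ} (hp : p.Prime)
    {c : ZMod (p ^ (m + 1))} (hc : c ≠ 0) (hpc : (p : ZMod (p ^ (m + 1))) * c = 0) :
    ∃ s, s * c = (p : ZMod (p ^ (m + 1))) ^ m := by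
  have : NeZero (p ^ (m + 1)) := ⟨pow_ne_zero _ hp.ne_zero⟩
  obtain ⟨t, ht⟩ : p ^ m ∣ c.val := by
    refine Nat.dvd_of_mul_dvd_mul_left hp.pos ?_
    rw [← pow_succ', ← ZMod.natCast_eq_zero_iff, Nat.cast_mul, ZMod.natCast_zmod_val, hpc]
  have hct : c = (p : ZMod (p ^ (m + 1))) ^ m * t := by
    rw [← ZMod.natCast_zmod_val c, ht, Nat.cast_mul, Nat.cast_pow]
  have hpt : ¬ p ∣ t := by
    rintro ⟨s, rfl⟩
    apply hc
    rw [hct, Nat.cast_mul, ← mul_assoc, ← pow_succ, ← Nat.cast_pow, ZMod.natCast_self, zero_mul]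
  obtain ⟨u, hu⟩ := (ZMod.isUnit_iff_coprime t _).mpr
    ((Nat.Coprime.pow_left _ ((hp.coprime_iff_not_dvd).mpr hpt)).symm)
  refine ⟨(u⁻¹ : (ZMod (p ^ (m + 1)))ˣ), ?_⟩
  rw [hct, ← hu, mul_left_comm, Units.inv_mul, mul_one]

theorem RG.natCast_pow_eq_zero (p m i : ℕ) : (p : RG p m i) ^ m = 0 := by
  rw [← map_natCast (algebraMap (Rm p m) (RG p m i)), ← map_pow, ← Nat.cast_pow,
    ZMod.natCast_self, map_zero]

theorem sg_pow (p m i k : ℕ) :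
    sg p m i ^ k = of (Rm p m) (Cyc p i) (Multiplicative.ofAdd (k : ZMod (p ^ i))) := by
  rw [sg, ← map_pow, ← ofAdd_nsmul, nsmul_one]

theorem sg_pow_prime_pow (p m i : ℕ) : sg p m i ^ p ^ i = 1 := by
  rw [sg_pow, Nat.cast_pow, ← Nat.cast_pow, ZMod.natCast_self, ofAdd_zero, map_one]

theorem sum_range_sg_pow (p m i : ℕ) [NeZero p] :
    ∑ k ∈ range (p ^ i), sg p m i ^ k = ∑ g : Cyc p i, of (Rm p m) (Cyc p i) g := by
  refine sum_nbij' (fun k => Multiplicative.ofAdd (k : ZMod (p ^ i)))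
    (fun g => (Multiplicative.toAdd g).val) (by simp) (by simp [ZMod.val_lt]) ?_ (by simp)
    (fun k _ => sg_pow p m i k)
  intro k hk
  simpa using ZMod.val_cast_of_lt (mem_range.mp hk)

theorem Pel_self_zero (p m i : ℕ) : Pel p m i i 0 = ∑ k ∈ range (p ^ i), sg p m i ^ k := by
  simp [Pel]

theorem of_mul_eq_self_of_sg_mul_eq_self {p m i : ℕ} [NeZero p] {y : RG p m i}
    (hy : sg p m i * y = y) (g : Cyc p i) : of (Rm p m) (Cyc p i) g * y = y := by
  have hg : of (Rm p m) (Cyc p i) g = sg p m i ^ (Multiplicative.toAdd g).val := by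
    rw [sg_pow, ZMod.natCast_zmod_val, ofAdd_toAdd]
  rw [hg]
  induction (Multiplicative.toAdd g).val with
  | zero => rw [pow_zero, one_mul]
  | succ n ih => rw [pow_succ, mul_assoc, hy, ih]

theorem nonzero_ideal_contains_general (p m : ℕ) (hp : p.Prime) (hm : 1 ≤ m) (i : ℕ)
    (I : Ideal (RG p m i)) (hI : I ≠ ⊥) :
    (p : RG p m i) ^ (m - 1) * (sg p m i - 1) ^ (p ^ i - 1) ∈ I ∧
    (p : RG p m i) ^ (m - 1) * (sg p m i - 1) ^ (p ^ i - 1) =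
      (p : RG p m i) ^ (m - 1) * Pel p m i i 0 := by
  obtain ⟨m, rfl⟩ : ∃ k, m = k + 1 := ⟨m - 1, by omega⟩
  have : NeZero p := ⟨hp.ne_zero⟩
  have hpm := RG.natCast_pow_eq_zero p (m + 1) i
  rw [Nat.add_sub_cancel, natCast_pow_mul_sub_one_pow_pred hp hpm, Pel_self_zero,
    sum_range_sg_pow]
  refine ⟨?_, rfl⟩
  obtain ⟨y, hyI, hy0, hσy, hpy⟩ := I.exists_ne_zero_mul_eq_zero_of_isNilpotent hI
    (isNilpotent_sub_one_of_pow_prime_pow_eq_one hp ⟨_, hpm⟩ (sg_pow_prime_pow p (m + 1) i))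
    ⟨_, hpm⟩
  have hy := eq_coeff_one_smul_sum_of_of_mul_eq_self
    (of_mul_eq_self_of_sg_mul_eq_self (by rwa [sub_mul, one_mul, sub_eq_zero] at hσy))
  obtain ⟨s, hs⟩ := ZMod.exists_mul_eq_prime_pow_of_natCast_mul_eq_zero hp (c := y.coeff 1)
    (fun hc => hy0 (by rw [hy, hc, zero_smul]))
    (by simpa [MonoidAlgebra.natCast_def] using congrArg (fun z : RG p (m + 1) i => z.coeff 1) hpy)
  convert I.smul_of_tower_mem s hyI using 1
  rw [hy, smul_smul, hs, ← map_natCast (algebraMap (Rm p (m + 1)) (RG p (m + 1) i)), ← map_pow,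
    Algebra.smul_def]

/-- Lemma 3.5 (`le:idealrmgi`). -/
theorem nonzero_ideal_contains (p n m : ℕ) (hp : p.Prime) (hm : 1 ≤ m) (i : ℕ) (hin : i ≤ n)
    (I : Ideal (RG p m i)) (hI : I ≠ ⊥) :
    (p : RG p m i) ^ (m - 1) * (sg p m i - 1) ^ (p ^ i - 1) ∈ I ∧
    (p : RG p m i) ^ (m - 1) * (sg p m i - 1) ^ (p ^ i - 1) =
      (p : RG p m i) ^ (m - 1) * Pel p m i i 0 :=
  nonzero_ideal_contains_general p m hp hm i I hI
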